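/- Assume d is odd. A unit vector |b⟩ ∈ ℂ^d⊗ℂ^d is the fiducial vector of a WH-type basis if and only if the operator B₀ = ∑_{i=-(d-1)/2}^{(d-1)/2} |b_i⁰⟩⟨b_i⁰|, where |b_i⁰⟩ = K_i P_i |b⟩, restricted to H₀ equals (1/d)·I; equivalently, the vectors K_i P_i|b⟩ ∈ H₀ are pairwise orthogonal, each of norm 1/√d. Here P_i is the projector onto the invariant subspace H_i and K_i is the self-adjoint involutive unitary swapping H_i with H₀ via the intertwining isometries, commuting with all T_a⊗T_a. -/

import Mathlib

open Matrix Complex BigOperators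

noncomputable def ww (d : ℕ) : ℂ := Complex.exp (2 * Real.pi * Complex.I / d)

noncomputable def tt (d : ℕ) : ℂ := Complex.exp (2 * Real.pi * Complex.I * (d + 1) / (2 * d))

/-- Displacement operator `T_a = τ^{a₁a₂} S^{a₁} C^{a₂}` as a concrete matrix. -/
noncomputable def T (d : ℕ) (a : ℤ × ℤ) : Matrix (ZMod d) (ZMod d) ℂ :=
  Matrix.of fun i j => tt d ^ (a.1 * a.2) *
    (if i = j + (a.1 : ZMod d) then ww d ^ (a.2 * (j.val : ℤ)) else 0)

def fz {d : ℕ} (a : Fin d × Fin d) : ℤ × ℤ := (((a.1 : ℕ) : ℤ), ((a.2 : ℕ) : ℤ))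

noncomputable def dotc {α : Type*} [Fintype α] (v w : α → ℂ) : ℂ := ∑ p, star (v p) * w p

/-- Orthogonal projection onto the symmetric subspace of `ℂ^d ⊗ ℂ^d`. -/
noncomputable def Psym (d : ℕ) : Matrix (ZMod d × ZMod d) (ZMod d × ZMod d) ℂ :=
  Matrix.of fun p q => (1 / 2 : ℂ) * ((if p = q then 1 else 0) + (if p = (q.2, q.1) then 1 else 0))

/-- `T_a ⊗ T_a` -/
noncomputable def TT (d : ℕ) (a : ℤ × ℤ) : Matrix (ZMod d × ZMod d) (ZMod d × ZMod d) ℂ :=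
  Matrix.kroneckerMap (· * ·) (T d a) (T d a)

/-- Discrete Fourier transform matrix. -/
noncomputable def Fdft (d : ℕ) : Matrix (ZMod d) (ZMod d) ℂ :=
  Matrix.of fun i j => ((1 / Real.sqrt d : ℝ) : ℂ) * ww d ^ (i.val * j.val)

/-- The vector `|0⟩ ⊗ F|0⟩`. -/
noncomputable def b0 (d : ℕ) : ZMod d × ZMod d → ℂ :=
  fun p => (if p.1 = 0 then 1 else 0) * Fdft d p.2 0

/-- Partial trace over the first factor of `|v⟩⟨v|`. -/
noncomputable def ptrace1 (d : ℕ) [NeZero d] (v : ZMod d × ZMod d → ℂ) :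
    Matrix (ZMod d) (ZMod d) ℂ :=
  Matrix.of fun j l => ∑ i, v (i, j) * star (v (i, l))

/-- tensor square of a vector -/
noncomputable def tp {d : ℕ} (f : ZMod d → ℂ) : ZMod d × ZMod d → ℂ :=
  fun p => f p.1 * f p.2

/-- `b` is a fiducial vector of a WH-type basis. -/
def IsWHFiducial (d : ℕ) [NeZero d] (b : ZMod d × ZMod d → ℂ) : Prop :=
  dotc b b = 1 ∧ ∀ a : Fin d × Fin d, ((a.1 : ℕ), (a.2 : ℕ)) ≠ (0, 0) →
    dotc b ((TT d (fz a)).mulVec b) = 0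

noncomputable def Cm (d : ℕ) : Matrix (ZMod d) (ZMod d) ℂ :=
  Matrix.of fun i j => if i = j then ww d ^ (i.val) else 0

noncomputable def Sm (d : ℕ) : Matrix (ZMod d) (ZMod d) ℂ :=
  Matrix.of fun i j => if i = j + 1 then 1 else 0

/-- `(1/√2)(|j⟩|j+i⟩ ± |j+i⟩|j⟩)` (up to normalization), sign `s`. -/
noncomputable def symVec (d : ℕ) (i s : ℤ) (j : ZMod d) : ZMod d × ZMod d → ℂ :=
  fun p => (if p = (j, j + (i : ZMod d)) then 1 else 0) +
    (s : ℂ) * (if p = (j + (i : ZMod d), j) then 1 else 0)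

/-- The invariant subspace `H_{±i}`. -/
noncomputable def Hsub (d : ℕ) (i s : ℤ) : Submodule ℂ (ZMod d × ZMod d → ℂ) :=
  Submodule.span ℂ (Set.range (symVec d i s))

/-- The swap operator on `ℂ^d ⊗ ℂ^d`. -/
def swapL (d : ℕ) : (ZMod d × ZMod d → ℂ) →ₗ[ℂ] (ZMod d × ZMod d → ℂ) where
  toFun v := fun p => v (p.2, p.1)
  map_add' _ _ := rfl
  map_smul' _ _ := rfl

/-- `H_t` for `t ∈ [-(d-1)/2 .. (d-1)/2]` (d odd). -/
noncomputable def Hodd (d : ℕ) (t : ℤ) : Submodule ℂ (ZMod d × ZMod d → ℂ) :=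
  if 0 ≤ t then Hsub d t 1 else Hsub d (-t) (-1)

/-!
Write `b = ∑ₜ Pₜ b` along the orthogonal decomposition `ℂ^d ⊗ ℂ^d = ⨁ₜ Hₜ` into
`T_a ⊗ T_a`-invariant subspaces. Cross terms drop out, and `Kₜ` is a unitary commuting with
`T_a ⊗ T_a`, so `⟨b|T_a ⊗ T_a|b⟩ = ∑ₜ ⟨bₜ⁰|T_a ⊗ T_a|bₜ⁰⟩` with `bₜ⁰ = Kₜ Pₜ b ∈ H₀ = span {|jj⟩}`.
On `H₀`, `T_a ⊗ T_a` shifts by `a₁` and twists by the character `l ↦ ω^(2 a₂ l)`, so up to a phase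
these numbers are the Fourier coefficients of a shifted diagonal of `B₀ = ∑ₜ |bₜ⁰⟩⟨bₜ⁰|`.
As `d` is odd, `ω²` is again a primitive root, and Fourier inversion turns the fiducial conditions
into `B₀ = I/d`. Finally, if `A` is the `d × d` matrix whose rows are the coordinates of the `bₜ⁰`,
then `B₀ = I/d` reads `Aᴴ A = I/d` and the orthogonality conditions read `A Aᴴ = I/d`; these are
equivalent for a square matrix.
-/

open Finset

section Dotc

variable {α : Type*} [Fintype α]

lemma dotc_eq_star_dotProduct (v w : α → ℂ) : dotc v w = star v ⬝ᵥ w := rfl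

lemma dotc_self_eq_zero_iff {v : α → ℂ} : dotc v v = 0 ↔ v = 0 := by
  open scoped ComplexOrder in exact dotProduct_star_self_eq_zero

lemma dotc_mulVec_left (M : Matrix α α ℂ) (v w : α → ℂ) :
    dotc (M *ᵥ v) w = dotc v (Mᴴ *ᵥ w) := by
  rw [dotc_eq_star_dotProduct, dotc_eq_star_dotProduct, star_mulVec, dotProduct_mulVec]

lemma dotc_single_one [DecidableEq α] (v : α → ℂ) (p : α) :
    dotc v (Pi.single p 1) = star (v p) := by
  rw [dotc_eq_star_dotProduct, dotProduct_single_one, Pi.star_apply]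

lemma dotc_sum_left {ι : Type*} (s : Finset ι) (v : ι → α → ℂ) (w : α → ℂ) :
    dotc (∑ i ∈ s, v i) w = ∑ i ∈ s, dotc (v i) w := by
  simp only [dotc_eq_star_dotProduct, star_sum, sum_dotProduct]

lemma dotc_sum_right {ι : Type*} (s : Finset ι) (v : α → ℂ) (w : ι → α → ℂ) :
    dotc v (∑ i ∈ s, w i) = ∑ i ∈ s, dotc v (w i) := by
  simp only [dotc_eq_star_dotProduct, dotProduct_sum]

lemma mulVec_eq_self_of_mem_range {P : Matrix α α ℂ} (hPP : P * P = P) {v : α → ℂ}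
    (hv : v ∈ LinearMap.range P.mulVecLin) : P *ᵥ v = v := by
  obtain ⟨w, rfl⟩ := hv
  simp only [mulVecLin_apply, mulVec_mulVec, hPP]

lemma mulVec_eq_zero_of_orthogonal_range {P : Matrix α α ℂ} (hPH : Pᴴ = P) (hPP : P * P = P)
    {v : α → ℂ} (hv : ∀ w ∈ LinearMap.range P.mulVecLin, dotc v w = 0) : P *ᵥ v = 0 := by
  rw [← dotc_self_eq_zero_iff, dotc_mulVec_left, hPH, mulVec_mulVec, hPP]
  exact hv _ (LinearMap.mem_range_self _ _)

variable {ι : Type*} {s : Finset ι} {H : ι → Submodule ℂ (α → ℂ)}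

lemma sum_mulVec_eq_self_of_orthogonal
    (horth : ∀ i ∈ s, ∀ j ∈ s, i ≠ j → ∀ v ∈ H i, ∀ w ∈ H j, dotc v w = 0)
    (htop : ⨆ i ∈ s, H i = ⊤) {P : ι → Matrix α α ℂ}
    (hP : ∀ i ∈ s, (P i)ᴴ = P i ∧ P i * P i = P i ∧ LinearMap.range (P i).mulVecLin = H i)
    (v : α → ℂ) : ∑ i ∈ s, P i *ᵥ v = v := by
  obtain ⟨μ, hμ⟩ :=
    (Submodule.mem_iSup_finset_iff_exists_sum H v).mp (by rw [htop]; exact Submodule.mem_top)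
  have hPμ : ∀ i ∈ s, P i *ᵥ v = μ i := by
    intro i hi
    obtain ⟨hPH, hPP, hrange⟩ := hP i hi
    rw [← hμ, mulVec_sum, sum_eq_single_of_mem i hi]
    · exact mulVec_eq_self_of_mem_range hPP (by rw [hrange]; exact (μ i).2)
    · intro j hj hji
      refine mulVec_eq_zero_of_orthogonal_range hPH hPP fun w hw => ?_
      exact horth j hj i hi hji _ (μ j).2 w (by rwa [hrange] at hw)
  rw [sum_congr rfl hPμ, hμ]

lemma dotc_sum_mulVec_sum_of_orthogonal
    (horth : ∀ i ∈ s, ∀ j ∈ s, i ≠ j → ∀ v ∈ H i, ∀ w ∈ H j, dotc v w = 0)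
    {B : Matrix α α ℂ} (hB : ∀ i ∈ s, ∀ x ∈ H i, B *ᵥ x ∈ H i)
    {x : ι → α → ℂ} (hx : ∀ i ∈ s, x i ∈ H i) :
    dotc (∑ i ∈ s, x i) (B *ᵥ ∑ i ∈ s, x i) = ∑ i ∈ s, dotc (x i) (B *ᵥ x i) := by
  rw [mulVec_sum, dotc_sum_left]
  refine sum_congr rfl fun i hi => ?_
  rw [dotc_sum_right, sum_eq_single_of_mem i hi]
  exact fun j hj hji => horth i hi j hj hji.symm _ (hx i hi) _ (hB j hj _ (hx j hj))

lemma dotc_mulVec_mulVec_of_involutive [DecidableEq α] {K B : Matrix α α ℂ} (hKH : Kᴴ = K)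
    (hKK : K * K = 1) (hKB : K * B = B * K) (x : α → ℂ) :
    dotc (K *ᵥ x) (B *ᵥ (K *ᵥ x)) = dotc x (B *ᵥ x) := by
  rw [dotc_mulVec_left, hKH, mulVec_mulVec, mulVec_mulVec, Matrix.mul_assoc, ← hKB,
    ← Matrix.mul_assoc, hKK, Matrix.one_mul]

end Dotc

lemma Matrix.mul_eq_smul_one_comm_of_equiv {m n 𝕜 : Type*} [Fintype m] [DecidableEq m]
    [Fintype n] [DecidableEq n] [Field 𝕜] (e : m ≃ n) {A : Matrix m n 𝕜} {B : Matrix n m 𝕜}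
    {c : 𝕜} (hc : c ≠ 0) : A * B = c • 1 ↔ B * A = c • 1 := by
  rw [← inv_smul_eq_iff₀ hc, ← inv_smul_eq_iff₀ hc, ← Matrix.mul_smul, ← Matrix.smul_mul,
    mul_eq_one_comm_of_equiv e]

lemma ZMod.natCast_eq_zero_iff_of_lt {d a : ℕ} (ha : a < d) : (a : ZMod d) = 0 ↔ a = 0 := by
  rw [ZMod.natCast_eq_zero_iff]
  exact ⟨(Nat.eq_zero_of_dvd_of_lt · ha), fun h => h ▸ dvd_zero d⟩

lemma ZMod.sum_val_eq_sum_range {M : Type*} [AddCommMonoid M] (d : ℕ) [NeZero d] (g : ℕ → M) :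
    ∑ l : ZMod d, g l.val = ∑ i ∈ range d, g i := by
  obtain ⟨n, rfl⟩ := Nat.exists_eq_succ_of_ne_zero (NeZero.ne d)
  exact Fin.sum_univ_eq_sum_range g _

section Fourier

variable {K : Type*} [Field K] {d : ℕ} {ζ : K}

lemma IsPrimitiveRoot.geom_sum_zpow (hζ : IsPrimitiveRoot ζ d) (c : ℤ) :
    ∑ k ∈ range d, (ζ ^ c) ^ k = if (d : ℤ) ∣ c then (d : K) else 0 := by
  split_ifs with h
  · simp [(hζ.zpow_eq_one_iff_dvd c).mpr h]
  · have hpow : (ζ ^ c) ^ d = 1 := by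
      rw [← zpow_natCast, ← _root_.zpow_mul, mul_comm, _root_.zpow_mul, zpow_natCast,
        hζ.pow_eq_one, _root_.one_zpow]
    rw [geom_sum_eq (mt (hζ.zpow_eq_one_iff_dvd c).mp h), hpow, sub_self, zero_div]

variable [NeZero d]

/-- Fourier inversion on `ZMod d`. -/
lemma IsPrimitiveRoot.sum_range_mul_sum_pow_mul_val (hζ : IsPrimitiveRoot ζ d)
    (f : ZMod d → K) (j : ZMod d) :
    ∑ k ∈ range d, (ζ ^ (-(j.val : ℤ))) ^ k * ∑ l, f l * ζ ^ (k * l.val) = d * f j := by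
  have hζ0 : ζ ≠ 0 := hζ.ne_zero (NeZero.ne d)
  calc ∑ k ∈ range d, (ζ ^ (-(j.val : ℤ))) ^ k * ∑ l, f l * ζ ^ (k * l.val)
      = ∑ l, f l * ∑ k ∈ range d, (ζ ^ ((l.val : ℤ) - j.val)) ^ k := by
        simp_rw [mul_sum]
        rw [sum_comm]
        refine sum_congr rfl fun l _ => sum_congr rfl fun k _ => ?_
        rw [sub_eq_add_neg, zpow_add₀ hζ0, mul_pow, ← zpow_natCast (ζ ^ (l.val : ℤ)),
          ← _root_.zpow_mul, ← zpow_natCast ζ (k * l.val)]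
        push_cast
        ring_nf
    _ = d * f j := by
        simp_rw [hζ.geom_sum_zpow, ← ZMod.intCast_eq_intCast_iff_dvd_sub]
        simp [ZMod.intCast_cast, ZMod.cast_id', mul_comm]

lemma IsPrimitiveRoot.forall_sum_pow_mul_val_eq_ite_iff (hζ : IsPrimitiveRoot ζ d)
    (f : ZMod d → K) (c : K) :
    (∀ k < d, ∑ l, f l * ζ ^ (k * l.val) = if k = 0 then c else 0) ↔ ∀ j, f j = c / d := by
  have hd : (d : K) ≠ 0 := hζ.neZero'.out
  constructor
  · intro h j
    have hinv := hζ.sum_range_mul_sum_pow_mul_val f j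
    rw [sum_congr rfl fun k hk => by rw [h k (mem_range.mp hk)], sum_eq_single_of_mem 0
      (mem_range.mpr (Nat.pos_of_neZero d)) fun k _ hk => by rw [if_neg hk, mul_zero]] at hinv
    rw [eq_div_iff hd, mul_comm, ← hinv]
    simp
  · intro h k hk
    simp_rw [h, ← mul_sum, pow_mul, ZMod.sum_val_eq_sum_range d (fun i => (ζ ^ k) ^ i),
      ← zpow_natCast ζ k, hζ.geom_sum_zpow, Int.natCast_dvd_natCast]
    by_cases hk0 : k = 0
    · simp [hk0, div_mul_cancel₀ c hd]
    · simp [hk0, mt (Nat.eq_zero_of_dvd_of_lt · hk) hk0]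

lemma Matrix.eq_inv_smul_one_iff_forall_shift (N : Matrix (ZMod d) (ZMod d) K) :
    N = (d : K)⁻¹ • 1 ↔ ∀ a < d, ∀ l, N (l + a) l = (if a = 0 then 1 else 0) / d := by
  constructor
  · rintro rfl a ha l
    simp [Matrix.one_apply, ZMod.natCast_eq_zero_iff_of_lt ha, div_eq_inv_mul]
  · intro h
    ext i j
    have hij := h (i - j).val (ZMod.val_lt _) j
    rw [ZMod.natCast_zmod_val, add_sub_cancel] at hij
    simp [hij, Matrix.one_apply, div_eq_inv_mul, sub_eq_zero]

lemma IsPrimitiveRoot.eq_inv_smul_one_iff_forall_sum_shift (hζ : IsPrimitiveRoot ζ d)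
    (N : Matrix (ZMod d) (ZMod d) K) :
    N = (d : K)⁻¹ • 1 ↔ ∀ a₁ < d, ∀ a₂ < d,
      ∑ l, N (l + a₁) l * ζ ^ (a₂ * l.val) = if a₁ = 0 ∧ a₂ = 0 then 1 else 0 := by
  rw [Matrix.eq_inv_smul_one_iff_forall_shift]
  refine forall₂_congr fun a₁ _ => ?_
  rw [← hζ.forall_sum_pow_mul_val_eq_ite_iff]
  refine forall₂_congr fun a₂ _ => ?_
  by_cases h₂ : a₂ = 0 <;> simp [h₂]

end Fourier

noncomputable abbrev centeredRange (d : ℕ) : Finset ℤ :=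
  Icc (-(((d : ℤ) - 1) / 2)) (((d : ℤ) - 1) / 2)

section CenteredRange

variable {d : ℕ}

lemma neg_mem_centeredRange {t : ℤ} (ht : t ∈ centeredRange d) : -t ∈ centeredRange d := by
  rw [mem_Icc] at *
  omega

lemma card_centeredRange (hd : Odd d) : (centeredRange d).card = d := by
  obtain ⟨m, rfl⟩ := hd
  rw [Int.card_Icc]
  omega

lemma injOn_intCast_centeredRange (hd : Odd d) :
    Set.InjOn (Int.cast : ℤ → ZMod d) (centeredRange d) := by
  obtain ⟨m, rfl⟩ := hd
  intro s hs t ht hst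
  rw [coe_Icc, Set.mem_Icc] at hs ht
  have hdvd := (ZMod.intCast_eq_intCast_iff_dvd_sub s t _).mp hst
  have := Int.eq_zero_of_abs_lt_dvd hdvd (abs_lt.mpr ⟨by omega, by omega⟩)
  omega

lemma bijective_intCast_centeredRange (hd : Odd d) :
    Function.Bijective fun t : centeredRange d => (t : ZMod d) := by
  have : NeZero d := ⟨hd.pos.ne'⟩
  rw [Fintype.bijective_iff_injective_and_card, Fintype.card_coe, card_centeredRange hd,
    ZMod.card]
  exact ⟨fun s t h => Subtype.ext (injOn_intCast_centeredRange hd s.2 t.2 h), rfl⟩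

end CenteredRange

section Subspaces

variable {d : ℕ}

lemma symVec_eq_single (i s : ℤ) (j : ZMod d) :
    symVec d i s j = Pi.single (j, j + i) 1 + (s : ℂ) • Pi.single (j + i, j) 1 := by
  ext p
  simp [symVec, Pi.single_apply]

lemma Hodd_eq_Hsub (t : ℤ) : Hodd d t = Hsub d |t| (if 0 ≤ t then 1 else -1) := by
  unfold Hodd
  split_ifs with ht
  · rw [abs_of_nonneg ht]
  · rw [abs_of_neg (not_le.mp ht)]

lemma apply_eq_zero_of_mem_Hsub {i s : ℤ} {v : ZMod d × ZMod d → ℂ} (hv : v ∈ Hsub d i s)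
    {p : ZMod d × ZMod d} (h₁ : p.2 - p.1 ≠ i) (h₂ : p.1 - p.2 ≠ i) : v p = 0 := by
  induction hv using Submodule.span_induction with
  | mem x hx =>
    obtain ⟨j, rfl⟩ := hx
    have : p ≠ (j, j + i) := fun h => h₁ (by simp [h])
    have : p ≠ (j + i, j) := fun h => h₂ (by simp [h])
    simp [symVec, *]
  | zero => rfl
  | add x y _ _ hx hy => simp [hx, hy]
  | smul c x _ hx => simp [hx]

lemma apply_swap_of_mem_Hsub {i s : ℤ} (hs : s * s = 1) {v : ZMod d × ZMod d → ℂ}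
    (hv : v ∈ Hsub d i s) (p : ZMod d × ZMod d) : v p.swap = s * v p := by
  induction hv using Submodule.span_induction with
  | mem x hx =>
    obtain ⟨j, rfl⟩ := hx
    have hs' : (s : ℂ) * s = 1 := by exact_mod_cast hs
    obtain ⟨p₁, p₂⟩ := p
    simp only [symVec, Prod.swap_prod_mk, Prod.mk.injEq]
    split_ifs <;> simp_all
    -- only `i = 0` is left, where both terms of `symVec` sit at `(j, j)`
    linear_combination -hs'
  | zero => simp
  | add x y _ _ hx hy => simp [hx, hy, mul_add]
  | smul c x _ hx => simp [hx, mul_left_comm]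

lemma intCast_eq_sub_of_mem_Hodd {t : ℤ} {v : ZMod d × ZMod d → ℂ} (hv : v ∈ Hodd d t)
    {p : ZMod d × ZMod d} (hp : v p ≠ 0) : (t : ZMod d) = p.2 - p.1 ∨ (t : ZMod d) = p.1 - p.2 := by
  rw [Hodd_eq_Hsub] at hv
  by_contra! h
  rcases abs_choice t with ht | ht <;> rw [ht] at hv
  · exact hp (apply_eq_zero_of_mem_Hsub hv (Ne.symm h.1) (Ne.symm h.2))
  · refine hp (apply_eq_zero_of_mem_Hsub hv ?_ ?_) <;> push_cast <;> intro h'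
    · exact h.2 (by linear_combination h')
    · exact h.1 (by linear_combination h')

lemma apply_swap_of_mem_Hodd {t : ℤ} {v : ZMod d × ZMod d → ℂ} (hv : v ∈ Hodd d t)
    (p : ZMod d × ZMod d) : v p.swap = (if 0 ≤ t then 1 else -1 : ℤ) * v p := by
  rw [Hodd_eq_Hsub] at hv
  exact apply_swap_of_mem_Hsub (by split_ifs <;> norm_num) hv p

lemma symVec_mem_Hodd {u : ℤ} (hu : 0 ≤ u) (j : ZMod d) :
    symVec d u 1 j ∈ Hodd d u ∧ symVec d u (-1) j ∈ Hodd d (-u) := by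
  refine ⟨by rw [Hodd, if_pos hu]; exact Submodule.subset_span ⟨j, rfl⟩, ?_⟩
  rcases hu.eq_or_lt with rfl | hu
  · have : symVec d 0 (-1) j = 0 := by
      ext p
      simp only [symVec, Int.cast_zero, add_zero]
      split_ifs <;> norm_num
    rw [this]
    exact Submodule.zero_mem _
  · rw [Hodd, if_neg (by omega), neg_neg]
    exact Submodule.subset_span ⟨j, rfl⟩

lemma single_mem_Hodd_sup_Hodd_neg (t : ℤ) (p : ZMod d) :
    Pi.single (p, p + t) 1 ∈ Hodd d t ⊔ Hodd d (-t) := by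
  rcases le_or_gt 0 t with ht | ht
  · obtain ⟨h₁, h₂⟩ := symVec_mem_Hodd ht p
    have : Pi.single (p, p + t) 1 = (2 : ℂ)⁻¹ • (symVec d t 1 p + symVec d t (-1) p) := by
      rw [symVec_eq_single, symVec_eq_single]
      module
    rw [this]
    exact Submodule.smul_mem _ _ (Submodule.add_mem _ (Submodule.mem_sup_left h₁)
      (Submodule.mem_sup_right h₂))
  · obtain ⟨h₁, h₂⟩ := symVec_mem_Hodd (neg_nonneg.mpr ht.le) (p + (t : ZMod d))
    rw [neg_neg] at h₂
    have : Pi.single (p, p + t) 1 =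
        (2 : ℂ)⁻¹ • (symVec d (-t) 1 (p + t) - symVec d (-t) (-1) (p + (t : ZMod d))) := by
      rw [symVec_eq_single, symVec_eq_single, Int.cast_neg, add_neg_cancel_right]
      module
    rw [this]
    exact Submodule.smul_mem _ _ (Submodule.sub_mem _ (Submodule.mem_sup_right h₁)
      (Submodule.mem_sup_left h₂))

lemma iSup_Hodd_eq_top (hd : Odd d) : ⨆ t ∈ centeredRange d, Hodd d t = ⊤ := by
  have : NeZero d := ⟨hd.pos.ne'⟩
  rw [eq_top_iff, ← (Pi.basisFun ℂ _).span_eq, Submodule.span_le]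
  rintro _ ⟨⟨p, q⟩, rfl⟩
  obtain ⟨⟨t, ht⟩, htq⟩ := (bijective_intCast_centeredRange hd).2 (q - p)
  have hq : q = p + t := by rw [← sub_eq_iff_eq_add', ← htq]
  rw [Pi.basisFun_apply, hq]
  exact sup_le (le_biSup (Hodd d) ht) (le_biSup (Hodd d) (neg_mem_centeredRange ht))
    (single_mem_Hodd_sup_Hodd_neg t p)

variable [NeZero d]

lemma dotc_eq_zero_of_mem_Hodd (hd : Odd d) {s t : ℤ} (hs : s ∈ centeredRange d)
    (ht : t ∈ centeredRange d) (hst : s ≠ t) {v w : ZMod d × ZMod d → ℂ}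
    (hv : v ∈ Hodd d s) (hw : w ∈ Hodd d t) : dotc v w = 0 := by
  by_cases hneg : s = -t
  -- `H_t` and `H_{-t}` have the same support, but are symmetric resp. antisymmetric under swap.
  · subst hneg
    have hsign : ((if 0 ≤ -t then 1 else -1 : ℤ) : ℂ) * (if 0 ≤ t then 1 else -1 : ℤ) = -1 := by
      split_ifs <;> first | omega | norm_num
    have hanti : dotc v w = -dotc v w := by
      conv_lhs => rw [dotc, ← (Equiv.prodComm _ _).sum_comp]
      simp only [Equiv.prodComm_apply, apply_swap_of_mem_Hodd hv, apply_swap_of_mem_Hodd hw,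
        star_mul', star_intCast, dotc, ← sum_neg_distrib]
      refine sum_congr rfl fun p _ => ?_
      linear_combination star (v p) * w p * hsign
    exact self_eq_neg.mp hanti
  -- Otherwise the supports `{(p, q) | q - p = ±s}` and `{(p, q) | q - p = ±t}` are disjoint.
  · refine sum_eq_zero fun p _ => ?_
    by_contra h
    obtain ⟨hvp, hwp⟩ : v p ≠ 0 ∧ w p ≠ 0 := by simpa [not_or] using h
    have hcast : (s : ZMod d) = t ∨ (s : ZMod d) = ((-t : ℤ) : ZMod d) := by
      push_cast
      rcases intCast_eq_sub_of_mem_Hodd hv hvp with h₁ | h₁ <;>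
        rcases intCast_eq_sub_of_mem_Hodd hw hwp with h₂ | h₂ <;> rw [h₁, h₂] <;> simp
    rcases hcast with h | h
    · exact hst (injOn_intCast_centeredRange hd hs ht h)
    · exact hneg (injOn_intCast_centeredRange hd hs (neg_mem_centeredRange ht) h)

lemma TT_mulVec_single (a : ℤ × ℤ) (p q : ZMod d) :
    TT d a *ᵥ Pi.single (p, q) 1 =
      (T d a (p + a.1) p * T d a (q + a.1) q) • Pi.single (p + a.1, q + a.1) 1 := by
  ext ⟨r₁, r₂⟩
  simp only [mulVec_single_one, col_apply, TT, kroneckerMap_apply, T, of_apply, Pi.smul_apply,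
    Pi.single_apply, Prod.mk.injEq, smul_eq_mul]
  split_ifs <;> simp_all

lemma TT_mulVec_symVec (a : ℤ × ℤ) (i s : ℤ) (j : ZMod d) :
    TT d a *ᵥ symVec d i s j =
      (T d a (j + a.1) j * T d a (j + i + a.1) (j + i)) • symVec d i s (j + a.1) := by
  rw [symVec_eq_single, symVec_eq_single, mulVec_add, mulVec_smul, TT_mulVec_single,
    TT_mulVec_single, smul_add, smul_comm (s : ℂ), mul_comm (T d a (j + i + a.1) (j + i)),
    add_right_comm j]

lemma TT_mulVec_mem_Hodd (a : ℤ × ℤ) (t : ℤ) {v : ZMod d × ZMod d → ℂ}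
    (hv : v ∈ Hodd d t) : TT d a *ᵥ v ∈ Hodd d t := by
  rw [Hodd_eq_Hsub] at *
  induction hv using Submodule.span_induction with
  | mem x hx =>
    obtain ⟨j, rfl⟩ := hx
    rw [TT_mulVec_symVec]
    exact Submodule.smul_mem _ _ (Submodule.subset_span ⟨_, rfl⟩)
  | zero => rw [mulVec_zero]; exact Submodule.zero_mem _
  | add x y _ _ hx hy => rw [mulVec_add]; exact Submodule.add_mem _ hx hy
  | smul c x _ hx => rw [mulVec_smul]; exact Submodule.smul_mem _ _ hx

lemma eq_sum_single_of_mem_Hodd_zero {w : ZMod d × ZMod d → ℂ} (hw : w ∈ Hodd d 0) :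
    w = ∑ l, w (l, l) • Pi.single (l, l) 1 := by
  ext ⟨p, q⟩
  simp only [Finset.sum_apply, Pi.smul_apply, Pi.single_apply, Prod.mk.injEq, smul_eq_mul,
    mul_ite, mul_one, mul_zero]
  by_cases hpq : p = q
  · simp [hpq]
  · rw [sum_eq_zero fun l _ => if_neg fun h => hpq (h.1.trans h.2.symm)]
    by_contra hw0
    rcases intCast_eq_sub_of_mem_Hodd hw hw0 with h | h <;> rw [Int.cast_zero] at h
    · exact hpq (sub_eq_zero.mp h.symm).symm
    · exact hpq (sub_eq_zero.mp h.symm)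

lemma dotc_eq_sum_of_mem_Hodd_zero (v : ZMod d × ZMod d → ℂ) {w : ZMod d × ZMod d → ℂ}
    (hw : w ∈ Hodd d 0) : dotc v w = ∑ l, star (v (l, l)) * w (l, l) := by
  conv_lhs => rw [eq_sum_single_of_mem_Hodd_zero hw]
  rw [dotc_sum_right]
  refine sum_congr rfl fun l _ => ?_
  rw [dotc_eq_star_dotProduct, dotProduct_smul, ← dotc_eq_star_dotProduct, dotc_single_one,
    smul_eq_mul, mul_comm]

lemma dotc_TT_mulVec_of_mem_Hodd_zero (a : ℤ × ℤ) (v : ZMod d × ZMod d → ℂ)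
    {w : ZMod d × ZMod d → ℂ} (hw : w ∈ Hodd d 0) :
    dotc v (TT d a *ᵥ w) =
      ∑ l, T d a (l + a.1) l ^ 2 * (star (v (l + a.1, l + a.1)) * w (l, l)) := by
  conv_lhs => rw [eq_sum_single_of_mem_Hodd_zero hw]
  rw [mulVec_sum, dotc_sum_right]
  refine sum_congr rfl fun l _ => ?_
  rw [mulVec_smul, TT_mulVec_single, smul_smul, dotc_eq_star_dotProduct, dotProduct_smul,
    ← dotc_eq_star_dotProduct, dotc_single_one, smul_eq_mul]
  ring

end Subspaces

section Frame

variable {d : ℕ} [NeZero d]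

/-- For `A = diagCoeffs s v`, the matrices `Aᴴ * A` and `A * Aᴴ` are the transposes of
`B₀ = ∑ₜ |vₜ⟩⟨vₜ|` (on `H₀`, in the basis `|jj⟩`) and of the Gram matrix of the `vₜ`. -/
def diagCoeffs {ι : Type*} (s : Finset ι) (v : ι → ZMod d × ZMod d → ℂ) : Matrix s (ZMod d) ℂ :=
  Matrix.of fun t j => v t (j, j)

lemma forall_dotc_eq_ite_iff_diagCoeffs {ι : Type*} [DecidableEq ι] {s : Finset ι}
    {v : ι → ZMod d × ZMod d → ℂ} (hv : ∀ t ∈ s, v t ∈ Hodd d 0) (c : ℂ) :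
    (∀ i ∈ s, ∀ j ∈ s, dotc (v i) (v j) = if i = j then c else 0) ↔
      diagCoeffs s v * (diagCoeffs s v)ᴴ = c • 1 := by
  rw [← Matrix.ext_iff, forall_comm, Subtype.forall]
  refine forall₂_congr fun j hj => ?_
  rw [Subtype.forall]
  refine forall₂_congr fun i hi => ?_
  rw [dotc_eq_sum_of_mem_Hodd_zero _ (hv i hi)]
  simp only [mul_apply, conjTranspose_apply, diagCoeffs, of_apply, Matrix.smul_apply, one_apply,
    Subtype.mk.injEq, eq_comm (a := i), smul_eq_mul, mul_ite, mul_one, mul_zero, mul_comm]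

lemma dotc_TT_mulVec_eq_sum_diagCoeffs (hd : Odd d) (a : ℤ × ℤ)
    {P K : ℤ → Matrix (ZMod d × ZMod d) (ZMod d × ZMod d) ℂ}
    (hP : ∀ t ∈ centeredRange d,
      (P t)ᴴ = P t ∧ P t * P t = P t ∧ LinearMap.range (P t).mulVecLin = Hodd d t)
    (hK : ∀ t ∈ centeredRange d, (K t)ᴴ = K t ∧ K t * K t = 1 ∧ K t * TT d a = TT d a * K t)
    {b : ZMod d × ZMod d → ℂ} (hKPb : ∀ t ∈ centeredRange d, (K t * P t) *ᵥ b ∈ Hodd d 0) :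
    dotc b (TT d a *ᵥ b) = ∑ l, T d a (l + a.1) l ^ 2 *
      ((diagCoeffs (centeredRange d) fun t => (K t * P t) *ᵥ b)ᴴ *
        diagCoeffs (centeredRange d) fun t => (K t * P t) *ᵥ b) (l + a.1) l := by
  have horth : ∀ s ∈ centeredRange d, ∀ t ∈ centeredRange d, s ≠ t →
      ∀ v ∈ Hodd d s, ∀ w ∈ Hodd d t, dotc v w = 0 :=
    fun s hs t ht hst v hv w hw => dotc_eq_zero_of_mem_Hodd hd hs ht hst hv hw
  have hPb : ∀ t ∈ centeredRange d, P t *ᵥ b ∈ Hodd d t := fun t ht =>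
    (hP t ht).2.2 ▸ LinearMap.mem_range_self _ b
  calc dotc b (TT d a *ᵥ b)
      = dotc (∑ t ∈ centeredRange d, P t *ᵥ b) (TT d a *ᵥ ∑ t ∈ centeredRange d, P t *ᵥ b) := by
        rw [sum_mulVec_eq_self_of_orthogonal horth (iSup_Hodd_eq_top hd) hP]
    _ = ∑ t ∈ centeredRange d, dotc (P t *ᵥ b) (TT d a *ᵥ (P t *ᵥ b)) :=
        dotc_sum_mulVec_sum_of_orthogonal horth (fun t _ _ => TT_mulVec_mem_Hodd a t) hPb
    _ = ∑ t ∈ centeredRange d, dotc ((K t * P t) *ᵥ b) (TT d a *ᵥ ((K t * P t) *ᵥ b)) := by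
        refine sum_congr rfl fun t ht => ?_
        obtain ⟨hKH, hKK, hKT⟩ := hK t ht
        rw [← mulVec_mulVec, dotc_mulVec_mulVec_of_involutive hKH hKK hKT]
    _ = ∑ t ∈ centeredRange d, ∑ l, T d a (l + a.1) l ^ 2 *
          (star (((K t * P t) *ᵥ b) (l + a.1, l + a.1)) * ((K t * P t) *ᵥ b) (l, l)) :=
        sum_congr rfl fun t ht => dotc_TT_mulVec_of_mem_Hodd_zero a _ (hKPb t ht)
    _ = _ := by
        rw [sum_comm]
        simp only [mul_apply, conjTranspose_apply, diagCoeffs, of_apply, mul_sum]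
        exact sum_congr rfl fun l _ => (sum_coe_sort _ _).symm

end Frame

section Fiducial

variable {d : ℕ}

lemma T_fz_apply_sq (a : Fin d × Fin d) (l : ZMod d) :
    T d (fz a) (l + (fz a).1) l ^ 2 =
      (tt d ^ ((fz a).1 * (fz a).2)) ^ 2 * (ww d ^ 2) ^ ((a.2 : ℕ) * l.val) := by
  simp only [T, of_apply, fz, if_true]
  norm_cast
  ring

variable [NeZero d]

lemma TT_zero : TT d (0, 0) = 1 := by
  ext ⟨p₁, p₂⟩ ⟨q₁, q₂⟩
  simp only [TT, kroneckerMap_apply, T, of_apply, one_apply, Prod.mk.injEq]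
  split_ifs <;> simp_all

lemma isWHFiducial_iff_of_dotc_TT_mulVec_eq {b : ZMod d × ZMod d → ℂ} (hb : dotc b b = 1)
    (S : ℕ → ℕ → ℂ)
    (hS : ∀ a : Fin d × Fin d,
      dotc b (TT d (fz a) *ᵥ b) = (tt d ^ ((fz a).1 * (fz a).2)) ^ 2 * S a.1 a.2) :
    IsWHFiducial d b ↔ ∀ a₁ < d, ∀ a₂ < d, S a₁ a₂ = if a₁ = 0 ∧ a₂ = 0 then 1 else 0 := by
  have htt : ∀ a : Fin d × Fin d, (tt d ^ ((fz a).1 * (fz a).2)) ^ 2 ≠ 0 :=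
    fun a => pow_ne_zero _ (zpow_ne_zero _ (Complex.exp_ne_zero _))
  constructor
  · rintro ⟨-, h⟩ a₁ ha₁ a₂ ha₂
    have hSa := hS (⟨a₁, ha₁⟩, ⟨a₂, ha₂⟩)
    split_ifs with h₀
    · obtain ⟨rfl, rfl⟩ := h₀
      simpa [fz, TT_zero, hb] using hSa.symm
    · rw [h _ (by simpa using h₀)] at hSa
      exact (mul_eq_zero.mp hSa.symm).resolve_left (htt _)
  · refine fun h => ⟨hb, fun a ha => ?_⟩
    rw [hS, h _ a.1.2 _ a.2.2, if_neg (by simpa using ha), mul_zero]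

end Fiducial

theorem stmt17 (d : ℕ) [NeZero d] (hd : Odd d)
    (P K : ℤ → Matrix (ZMod d × ZMod d) (ZMod d × ZMod d) ℂ)
    (hP : ∀ t ∈ Finset.Icc (-(((d : ℤ) - 1) / 2)) (((d : ℤ) - 1) / 2),
      (P t)ᴴ = P t ∧ P t * P t = P t ∧
      LinearMap.range (Matrix.mulVecLin (P t)) = Hodd d t)
    (hK : ∀ t ∈ Finset.Icc (-(((d : ℤ) - 1) / 2)) (((d : ℤ) - 1) / 2),
      (K t)ᴴ = K t ∧ K t * K t = 1 ∧
      (∀ a : Fin d × Fin d, K t * TT d (fz a) = TT d (fz a) * K t) ∧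
      (∀ v ∈ Hodd d t, (K t).mulVec v ∈ Hodd d 0) ∧
      (∀ v ∈ Hodd d 0, (K t).mulVec v ∈ Hodd d t) ∧
      (∀ v : ZMod d × ZMod d → ℂ,
        (∀ w ∈ Hodd d t ⊔ Hodd d 0, dotc w v = 0) → (K t).mulVec v = v))
    (b : ZMod d × ZMod d → ℂ) (hb : dotc b b = 1) :
    IsWHFiducial d b ↔
      ∀ s ∈ Finset.Icc (-(((d : ℤ) - 1) / 2)) (((d : ℤ) - 1) / 2), ∀ t ∈ Finset.Icc (-(((d : ℤ) - 1) / 2)) (((d : ℤ) - 1) / 2),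
        dotc ((K s * P s).mulVec b) ((K t * P t).mulVec b) =
          if s = t then (d : ℂ)⁻¹ else 0 := by
  have hζ : IsPrimitiveRoot (ww d ^ 2) d :=
    (Complex.isPrimitiveRoot_exp d (NeZero.ne d)).pow_of_coprime 2 (Nat.coprime_two_left.mpr hd)
  have hKPb : ∀ t ∈ centeredRange d, (K t * P t) *ᵥ b ∈ Hodd d 0 := fun t ht => by
    rw [← mulVec_mulVec]
    exact (hK t ht).2.2.2.1 _ ((hP t ht).2.2 ▸ LinearMap.mem_range_self _ b)
  rw [forall_dotc_eq_ite_iff_diagCoeffs hKPb, Matrix.mul_eq_smul_one_comm_of_equiv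
    (.ofBijective _ (bijective_intCast_centeredRange hd)) (by simp [NeZero.ne d]),
    hζ.eq_inv_smul_one_iff_forall_sum_shift]
  refine isWHFiducial_iff_of_dotc_TT_mulVec_eq hb _ fun a => ?_
  rw [dotc_TT_mulVec_eq_sum_diagCoeffs hd (fz a) hP
    (fun t ht => ⟨(hK t ht).1, (hK t ht).2.1, (hK t ht).2.2.1 a⟩) hKPb, mul_sum]
  refine sum_congr rfl fun l _ => ?_
  rw [T_fz_apply_sq]
  simp only [fz, Int.cast_natCast]
  ring
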